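/- Let $\Phi_1 : X \to Y$ and $\Phi_2 : Y \to Z$ be dill maps whose invariants $Z$ and $D$ are well-defined. Then $D(\Phi_2 \circ \Phi_1) \leq Z(\Phi_2)\, D(\Phi_1) + D(\Phi_2)$. -/
import Mathlib


open Filter Topology

section Defs

variable {A : Type*} {B : Type*} {C : Type*}

/-- The one-sided shift map. -/
def shift (x : ℕ → A) : ℕ → A := fun n => x (n + 1)

/-- A (one-sided) subshift: a closed, shift-invariant set of configurations. -/
def Subshift [TopologicalSpace A] (X : Set (ℕ → A)) : Prop :=
  IsClosed X ∧ ∀ x ∈ X, shift x ∈ X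

/-- `X` is uniformly recurrent: every pattern occurring in `X` occurs in every
sufficiently long window of every point of `X`. -/
def UniformlyRecurrent (X : Set (ℕ → A)) : Prop :=
  ∀ x ∈ X, ∀ l : ℕ, ∃ N : ℕ, ∀ y ∈ X, ∃ i < N, ∀ k < l, y (i + k) = x k

/-- A block map: a continuous shift-commuting map. -/
def BlockMap [TopologicalSpace A] [TopologicalSpace B] (X : Set (ℕ → A)) (Y : Set (ℕ → B))
    (f : (ℕ → A) → (ℕ → B)) : Prop :=
  Set.MapsTo f X Y ∧ ContinuousOn f X ∧ ∀ x ∈ X, f (shift x) = shift (f x)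

/-- `s` is a cocycle for `Φ` on `X`: `Φ (σ x) = σ^(s x) (Φ x)`. -/
def IsCocycle (X : Set (ℕ → A)) (Φ : (ℕ → A) → (ℕ → B)) (s : (ℕ → A) → ℕ) : Prop :=
  ∀ x ∈ X, ∀ n : ℕ, Φ (shift x) n = Φ x (n + s x)

/-- A dill map: a continuous map with a continuous cocycle which is nontrivial
along every orbit. -/
def DillMap [TopologicalSpace A] [TopologicalSpace B] (X : Set (ℕ → A)) (Y : Set (ℕ → B))
    (Φ : (ℕ → A) → (ℕ → B)) : Prop :=
  Set.MapsTo Φ X Y ∧ ContinuousOn Φ X ∧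
    ∃ s : (ℕ → A) → ℕ, ContinuousOn s X ∧ IsCocycle X Φ s ∧
      ∀ x ∈ X, ∃ n : ℕ, 0 < s (shift^[n] x)

/-- Continuity (local constancy) of a word-valued function on `X`. -/
def WordContinuousOn (φ : (ℕ → A) → List B) (X : Set (ℕ → A)) : Prop :=
  ∀ x ∈ X, ∃ R : ℕ, ∀ y ∈ X, (∀ k ≤ R, y k = x k) → φ y = φ x

/-- `φ` is an implementation of `Φ` on `X`:
`Φ x = φ x ++ φ (σ x) ++ φ (σ² x) ++ ⋯`, expressed coordinatewise. -/
def IsImplementation (X : Set (ℕ → A)) (Φ : (ℕ → A) → (ℕ → B))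
    (φ : (ℕ → A) → List B) : Prop :=
  WordContinuousOn φ X ∧ ∀ x ∈ X, ∀ n : ℕ,
    Φ x n = if h : n < (φ x).length then (φ x).get ⟨n, h⟩
            else Φ (shift x) (n - (φ x).length)

/-- `ⁿφ(x) = φ(x) φ(σ x) ⋯ φ(σ^(n-1) x)`. -/
def iterWord (φ : (ℕ → A) → List B) (x : ℕ → A) : ℕ → List B
  | 0 => []
  | n + 1 => iterWord φ x n ++ φ (shift^[n] x)

/-- The invariant `Z`: `|ⁿφ(x)|/n → lam` for every `x ∈ X`. -/
def HasZ (X : Set (ℕ → A)) (φ : (ℕ → A) → List B) (lam : ℝ) : Prop :=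
  ∀ x ∈ X, Tendsto (fun n : ℕ => ((iterWord φ x n).length : ℝ) / n) atTop (𝓝 lam)

/-- `D` is a deviation bound: `| |ⁿφ(x)| - lam·n | ≤ D` for all `x ∈ X`, `n`. -/
def HasDBound (X : Set (ℕ → A)) (φ : (ℕ → A) → List B) (lam D : ℝ) : Prop :=
  ∀ x ∈ X, ∀ n : ℕ, |((iterWord φ x n).length : ℝ) - lam * n| ≤ D

/-- `R` is an in-radius bound for `φ` on `X`: `φ x` only depends on `x_[0,R]`. -/
def HasInRadius (X : Set (ℕ → A)) (φ : (ℕ → A) → List B) (R : ℕ) : Prop :=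
  ∀ x ∈ X, ∀ y ∈ X, (∀ k ≤ R, x k = y k) → φ x = φ y

/-- Almost equivalence: images of every point agree up to shifts. -/
def AlmostEquiv (X : Set (ℕ → A)) (Φ Ψ : (ℕ → A) → (ℕ → B)) : Prop :=
  ∀ x ∈ X, ∃ i j : ℕ, shift^[i] (Φ x) = shift^[j] (Ψ x)

/-- The implementation of the composition of two dill maps. -/
def compImpl (φ₁ : (ℕ → A) → List B) (Φ₁ : (ℕ → A) → (ℕ → B))
    (φ₂ : (ℕ → B) → List C) (x : ℕ → A) : List C :=
  iterWord φ₂ (Φ₁ x) (φ₁ x).length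

/-- Extension of a substitution to words. -/
def wordApply (τ : A → List A) (w : List A) : List A := (w.map τ).flatten

/-- Iterated image `τⁿ(a)` of a letter. -/
def subPow (τ : A → List A) : ℕ → A → List A
  | 0, a => [a]
  | n + 1, a => wordApply τ (subPow τ n a)

/-- The language of the substitution `τ`: infixes of the `τⁿ(a)`. -/
def InLanguage (τ : A → List A) (w : List A) : Prop :=
  ∃ a n, w <:+: subPow τ n a

/-- The one-sided subshift of the substitution `τ`. -/
def Xsub (τ : A → List A) : Set (ℕ → A) :=
  {x | ∀ i l : ℕ, InLanguage τ (List.ofFn fun k : Fin l => x (i + k))}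

/-- Primitivity of a substitution. -/
def Primitive (τ : A → List A) : Prop :=
  ∃ N, ∀ n ≥ N, ∀ a b : A, a ∈ subPow τ n b

/-- The word `w` occurs in `x` at position `i`. -/
def occursAt (w : List A) (x : ℕ → A) (i : ℕ) : Prop :=
  w = List.ofFn fun k : Fin w.length => x (i + k)

/-- The action of a (non-erasing) substitution on one-sided configurations. -/
def subApply [Inhabited A] (τ : A → List A) (x : ℕ → A) : ℕ → A :=
  fun n => (wordApply τ (List.ofFn fun k : Fin (n + 1) => x k)).getD n default

end Defs

section Aux

variable {A : Type*} {B : Type*} {C : Type*}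

lemma shift_iter_apply (x : ℕ → A) (m n : ℕ) : shift^[m] x n = x (n + m) := by
  induction m generalizing x with
  | zero => rfl
  | succ m ih =>
    rw [Function.iterate_succ_apply, ih, shift]
    ring_nf

lemma iterWord_length_succ (φ : (ℕ → A) → List B) (x : ℕ → A) (n : ℕ) :
    (iterWord φ x (n + 1)).length = (iterWord φ x n).length + (φ (shift^[n] x)).length := by
  simp [iterWord]

lemma iterWord_add (φ : (ℕ → A) → List B) (y : ℕ → A) (a b : ℕ) :
    iterWord φ y (a + b) = iterWord φ y a ++ iterWord φ (shift^[a] y) b := by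
  induction b with
  | zero => simp [iterWord]
  | succ b ih =>
    have h : shift^[b] (shift^[a] y) = shift^[a + b] y := by
      rw [← Function.iterate_add_apply, add_comm b a]
    show iterWord φ y (a + b) ++ φ (shift^[a+b] y) = _
    rw [ih, iterWord, h, List.append_assoc]

lemma impl_shift {X : Set (ℕ → A)} {Φ : (ℕ → A) → (ℕ → B)} {φ : (ℕ → A) → List B}
    (hφ : IsImplementation X Φ φ) {x : ℕ → A} (hx : x ∈ X) :
    Φ (shift x) = shift^[(φ x).length] (Φ x) := by
  funext n
  rw [shift_iter_apply, hφ.2 x hx (n + (φ x).length)]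
  rw [dif_neg (by omega)]
  congr 1
  omega

lemma iter_mem {X : Set (ℕ → A)} (hX : ∀ x ∈ X, shift x ∈ X) {x : ℕ → A} (hx : x ∈ X)
    (n : ℕ) : shift^[n] x ∈ X := by
  induction n with
  | zero => exact hx
  | succ n ih => rw [Function.iterate_succ_apply']; exact hX _ ih

lemma phi_iter {X : Set (ℕ → A)} {Φ : (ℕ → A) → (ℕ → B)} {φ : (ℕ → A) → List B}
    (hXi : ∀ x ∈ X, shift x ∈ X) (hφ : IsImplementation X Φ φ)
    {x : ℕ → A} (hx : x ∈ X) (n : ℕ) :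
    Φ (shift^[n] x) = shift^[(iterWord φ x n).length] (Φ x) := by
  induction n with
  | zero => simp [iterWord]
  | succ n ih =>
    rw [Function.iterate_succ_apply', impl_shift hφ (iter_mem hXi hx n), ih,
      ← Function.iterate_add_apply, iterWord_length_succ, add_comm]

lemma comp_iter {X : Set (ℕ → A)} {Φ₁ : (ℕ → A) → (ℕ → B)}
    {φ₁ : (ℕ → A) → List B} {φ₂ : (ℕ → B) → List C}
    (hXi : ∀ x ∈ X, shift x ∈ X) (hφ₁ : IsImplementation X Φ₁ φ₁)
    {x : ℕ → A} (hx : x ∈ X) (n : ℕ) :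
    iterWord (compImpl φ₁ Φ₁ φ₂) x n = iterWord φ₂ (Φ₁ x) (iterWord φ₁ x n).length := by
  induction n with
  | zero => simp [iterWord]
  | succ n ih =>
    rw [iterWord, ih, iterWord_length_succ, iterWord_add, compImpl,
      phi_iter hXi hφ₁ hx n]

end Aux

/-- `D(Φ₂ ∘ Φ₁) ≤ Z(Φ₂) D(Φ₁) + D(Φ₂)` for dill maps whose
invariants `Z` and `D` are well-defined. -/
theorem stmt9 {A B C : Type*} [Fintype A] [Fintype B] [Fintype C]
    [TopologicalSpace A] [DiscreteTopology A] [TopologicalSpace B] [DiscreteTopology B]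
    [TopologicalSpace C] [DiscreteTopology C]
    (X : Set (ℕ → A)) (Y : Set (ℕ → B)) (Z : Set (ℕ → C))
    (hX : Subshift X) (hY : Subshift Y) (hZ : Subshift Z)
    (Φ₁ : (ℕ → A) → (ℕ → B)) (Φ₂ : (ℕ → B) → (ℕ → C))
    (hΦ₁ : DillMap X Y Φ₁) (hΦ₂ : DillMap Y Z Φ₂)
    (φ₁ : (ℕ → A) → List B) (φ₂ : (ℕ → B) → List C)
    (hφ₁ : IsImplementation X Φ₁ φ₁) (hφ₂ : IsImplementation Y Φ₂ φ₂)
    (lam₁ lam₂ : ℝ) (hZ₁ : HasZ X φ₁ lam₁) (hZ₂ : HasZ Y φ₂ lam₂)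
    (D₁ D₂ : ℝ) (hD₁ : HasDBound X φ₁ lam₁ D₁) (hD₂ : HasDBound Y φ₂ lam₂ D₂) :
    HasDBound X (compImpl φ₁ Φ₁ φ₂) (lam₁ * lam₂) (lam₂ * D₁ + D₂) := by
  intro x hx n
  have hy : Φ₁ x ∈ Y := hΦ₁.1 hx
  have hlam₂ : 0 ≤ lam₂ := by
    refine ge_of_tendsto' (hZ₂ (Φ₁ x) hy) fun k => ?_
    positivity
  rw [comp_iter hX.2 hφ₁ hx n]
  set m := (iterWord φ₁ x n).length with hm
  have h2 := hD₂ (Φ₁ x) hy m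
  have h1 := hD₁ x hx n
  have key : ((iterWord φ₂ (Φ₁ x) m).length : ℝ) - lam₁ * lam₂ * n =
      (((iterWord φ₂ (Φ₁ x) m).length : ℝ) - lam₂ * m) + lam₂ * ((m : ℝ) - lam₁ * n) := by
    ring
  calc |((iterWord φ₂ (Φ₁ x) m).length : ℝ) - lam₁ * lam₂ * n|
      ≤ |((iterWord φ₂ (Φ₁ x) m).length : ℝ) - lam₂ * m| + |lam₂ * ((m : ℝ) - lam₁ * n)| := by
        rw [key]; exact abs_add_le _ _
    _ ≤ D₂ + lam₂ * D₁ := by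
        refine add_le_add h2 ?_
        rw [abs_mul, abs_of_nonneg hlam₂]
        exact mul_le_mul_of_nonneg_left h1 hlam₂
    _ = lam₂ * D₁ + D₂ := by ring
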